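/- Let $f_n, g_n$ be the mean-value simple approximations, over a common finite measurable partition $\{E_1,\dots,E_m\}$, of bounded pdfs $p$ and $r$ respectively, with values $a_i, b_i$ on $E_i$ (so $a_i = \frac{1}{\mu(E_i)}\int_{E_i} p\,d\mu$, $b_i = \frac{1}{\mu(E_i)}\int_{E_i} r\,d\mu$). Then for $\alpha > 1$ and each $i$ with $\mu(E_i) > 0$: $\frac{a_i^{\alpha}}{b_i^{\alpha-1}}\,\mu(E_i) \le \int_{E_i} \frac{p^{\alpha}}{r^{\alpha-1}}\, d\mu$. -/

import Mathlib

open MeasureTheory Real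

/-- Jensen step: let `E` be a partition set of positive (finite) measure,
and let `a = (1/μE) ∫_E p dμ`, `b = (1/μE) ∫_E r dμ` be the mean values of the pdfs `p`
and `r` over `E`. Then for `α > 1` (with `b > 0` and `r > 0` a.e. on `E`),
`(a^α / b^(α-1)) · μ(E) ≤ ∫_E p^α / r^(α-1) dμ`. -/
theorem jensen_meanValue_rpow {X : Type*} [MeasurableSpace X] (μ : Measure X)
    (p r : X → ℝ) (E : Set X) (α : ℝ) (hα : 1 < α)
    (hE : MeasurableSet E) (hE0 : 0 < μ E) (hEtop : μ E ≠ ⊤)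
    (hp_meas : Measurable p) (hr_meas : Measurable r)
    (hp_nonneg : ∀ x, 0 ≤ p x) (hr_nonneg : ∀ x, 0 ≤ r x)
    (hr_pos : ∀ᵐ x ∂(μ.restrict E), 0 < r x)
    (hp_int : IntegrableOn p E μ) (hr_int : IntegrableOn r E μ)
    (hfrac_int : IntegrableOn (fun x => (p x) ^ α / (r x) ^ (α - 1)) E μ)
    (a b : ℝ)
    (ha : a = (∫ y in E, p y ∂μ) / (μ E).toReal)
    (hb : b = (∫ y in E, r y ∂μ) / (μ E).toReal) (hb_pos : 0 < b) :
    a ^ α / b ^ (α - 1) * (μ E).toReal ≤ ∫ x in E, (p x) ^ α / (r x) ^ (α - 1) ∂μ := by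
  have hα0 : (0:ℝ) < α := lt_trans one_pos hα
  have hα1 : (0:ℝ) < α - 1 := by linarith
  set m : ℝ := (μ E).toReal with hm_def
  have hm : 0 < m := ENNReal.toReal_pos hE0.ne' hEtop
  set P : ℝ := ∫ y in E, p y ∂μ with hP_def
  set R : ℝ := ∫ y in E, r y ∂μ with hR_def
  set I : ℝ := ∫ x in E, (p x) ^ α / (r x) ^ (α - 1) ∂μ with hI_def
  have hP0 : 0 ≤ P := integral_nonneg fun x => hp_nonneg x
  have hR0 : 0 < R := by
    have : b * m = R := by rw [hb, div_mul_cancel₀ _ hm.ne']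
    rw [← this]; exact mul_pos hb_pos hm
  have hI0 : 0 ≤ I := integral_nonneg fun x =>
    div_nonneg (Real.rpow_nonneg (hp_nonneg x) _) (Real.rpow_nonneg (hr_nonneg x) _)
  set q : ℝ := α / (α - 1) with hq_def
  have hpq : Real.HolderConjugate α q := Real.HolderConjugate.conjExponent hα
  set c : ℝ := (α - 1) / α with hc_def
  set f : X → ℝ := fun x => p x / (r x) ^ c with hf_def
  set g : X → ℝ := fun x => (r x) ^ c with hg_def
  have hf_nonneg : ∀ x, 0 ≤ f x := fun x => by
    have := hp_nonneg x; have := hr_nonneg x; positivity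
  have hg_nonneg : ∀ x, 0 ≤ g x := fun x => Real.rpow_nonneg (hr_nonneg x) c
  have hg_meas : Measurable g := hr_meas.pow_const c
  have hf_meas : Measurable f := hp_meas.div hg_meas
  -- pointwise identities
  have hfα : ∀ x, f x ^ α = p x ^ α / (r x) ^ (α - 1) := by
    intro x
    have h1 : ((r x) ^ c) ^ α = (r x) ^ (α - 1) := by
      rw [← Real.rpow_mul (hr_nonneg x)]
      congr 1
      rw [hc_def]; field_simp
    rw [hf_def, Real.div_rpow (hp_nonneg x) (Real.rpow_nonneg (hr_nonneg x) c), h1]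
  have hgq : ∀ x, g x ^ q = r x := by
    intro x
    rw [hg_def, ← Real.rpow_mul (hr_nonneg x)]
    have : c * q = 1 := by
      rw [hc_def, hq_def]; field_simp
    rw [this, Real.rpow_one]
  -- Memℒp facts
  have hαtop : (ENNReal.ofReal α) ≠ ⊤ := ENNReal.ofReal_ne_top
  have hα_ne : (ENNReal.ofReal α) ≠ 0 := by
    simp [ENNReal.ofReal_eq_zero, not_le, hα0]
  have hq_ne : (ENNReal.ofReal q) ≠ 0 := by
    simp [ENNReal.ofReal_eq_zero, not_le, hpq.symm.pos]
  have hf_mem : MemLp f (ENNReal.ofReal α) (μ.restrict E) := by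
    rw [← memLp_norm_rpow_iff (hf_meas.aestronglyMeasurable) hα_ne hαtop,
      ENNReal.div_self hα_ne hαtop, memLp_one_iff_integrable]
    have : (fun x => ‖f x‖ ^ (ENNReal.ofReal α).toReal)
        = fun x => p x ^ α / (r x) ^ (α - 1) := by
      funext x
      rw [ENNReal.toReal_ofReal hα0.le, Real.norm_of_nonneg (hf_nonneg x), hfα x]
    rw [this]
    exact hfrac_int
  have hg_mem : MemLp g (ENNReal.ofReal q) (μ.restrict E) := by
    rw [← memLp_norm_rpow_iff (hg_meas.aestronglyMeasurable) hq_ne ENNReal.ofReal_ne_top,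
      ENNReal.div_self hq_ne ENNReal.ofReal_ne_top, memLp_one_iff_integrable]
    have : (fun x => ‖g x‖ ^ (ENNReal.ofReal q).toReal) = fun x => r x := by
      funext x
      rw [ENNReal.toReal_ofReal hpq.symm.nonneg, Real.norm_of_nonneg (hg_nonneg x), hgq x]
    rw [this]
    exact hr_int
  -- Hölder
  have holder := integral_mul_le_Lp_mul_Lq_of_nonneg hpq
    (Filter.Eventually.of_forall hf_nonneg) (Filter.Eventually.of_forall hg_nonneg)
    hf_mem hg_mem
  have h_fg : ∫ x in E, f x * g x ∂μ = P := by
    refine integral_congr_ae ?_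
    filter_upwards [hr_pos] with x hx
    rw [hf_def, hg_def]
    have hrc : (0:ℝ) < (r x) ^ c := Real.rpow_pos_of_pos hx c
    field_simp
  have h_fα : ∫ x in E, f x ^ α ∂μ = I := by
    refine integral_congr_ae (Filter.Eventually.of_forall fun x => ?_)
    exact hfα x
  have h_gq : ∫ x in E, g x ^ q ∂μ = R := by
    refine integral_congr_ae (Filter.Eventually.of_forall fun x => ?_)
    exact hgq x
  rw [h_fg, h_fα, h_gq] at holder
  -- holder : P ≤ I ^ (1/α) * R ^ (1/q)
  have key : P ^ α ≤ I * R ^ (α - 1) := by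
    have h1 : P ^ α ≤ (I ^ (1/α) * R ^ (1/q)) ^ α :=
      Real.rpow_le_rpow hP0 holder hα0.le
    have h2 : (I ^ (1/α) * R ^ (1/q)) ^ α = I * R ^ (α - 1) := by
      rw [Real.mul_rpow (Real.rpow_nonneg hI0 _) (Real.rpow_nonneg hR0.le _),
        ← Real.rpow_mul hI0, ← Real.rpow_mul hR0.le]
      rw [one_div_mul_cancel hα0.ne', Real.rpow_one]
      congr 1
      rw [hq_def]; field_simp
    rwa [h2] at h1
  -- algebra to conclude
  have hRα : 0 < R ^ (α - 1) := Real.rpow_pos_of_pos hR0 _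
  have hmα : 0 < m ^ (α - 1) := Real.rpow_pos_of_pos hm _
  have haα : a ^ α = P ^ α / m ^ α := by
    rw [ha, Real.div_rpow hP0 hm.le]
  have hbα : b ^ (α - 1) = R ^ (α - 1) / m ^ (α - 1) := by
    rw [hb, Real.div_rpow hR0.le hm.le]
  have hmsplit : m ^ α = m ^ (α - 1) * m := by
    have h := Real.rpow_add hm (α - 1) 1
    rw [Real.rpow_one] at h
    have he : α - 1 + 1 = α := by ring
    rwa [he] at h
  rw [haα, hbα, hmsplit]
  calc P ^ α / (m ^ (α - 1) * m) / (R ^ (α - 1) / m ^ (α - 1)) * m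
      = P ^ α / R ^ (α - 1) := by field_simp
    _ ≤ I := by rw [div_le_iff₀ hRα]; exact key
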